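/- Let a₀, a₁, a₂, a₃ ∈ (0, π) with k_j = exp(i a_j), and write s_j = sin a_j, b_j = cos a_j, x_j = s_j(2t_j − 1) with t_j ≥ 1 (so x_j ≥ s_j > 0). Then the equation 1 − 2 Re(conj(k₀) u₁ u₂ u₃) = |u₁|² + |u₂|² + |u₃|², where u_j = t_j(conj k_j − k_j) + k_j, is equivalent to x₁² + 2p(x₂,x₃)x₁ + q(x₂,x₃) = 0, where p(x₂,x₃) = s₀x₂x₃ − b₀b₃x₂ − b₀b₂x₃ − s₀b₂b₃ and q(x₂,x₃) = x₂² − 2b₀b₁x₂x₃ + x₃² − 2s₀b₁b₃x₂ − 2s₀b₁b₂x₃ + 2b₀b₁b₂b₃ + b₁² + b₂² + b₃² − 1. -/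

import Mathlib

/-! The substitution `u_j = cos a_j - i x_j` turns the relation into a polynomial identity in the
real and imaginary parts; expanding the real part of the product of four factors `c - i d` gives
the quadratic directly, with no trigonometric identity needed. -/

open Complex Real

theorem conj_exp_ofReal_mul_I (a : ℝ) :
    starRingEnd ℂ (exp (a * I)) = (Real.cos a : ℂ) - (Real.sin a : ℂ) * I := by
  rw [exp_mul_I, ← ofReal_cos, ← ofReal_sin, map_add, map_mul, conj_ofReal, conj_ofReal, conj_I]
  ring

theorem ofReal_mul_conj_exp_sub_add_exp (a t : ℝ) :
    (t : ℂ) * (starRingEnd ℂ (exp (a * I)) - exp (a * I)) + exp (a * I)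
      = (Real.cos a : ℂ) - ((Real.sin a * (2 * t - 1) : ℝ) : ℂ) * I := by
  rw [conj_exp_ofReal_mul_I, exp_mul_I, ← ofReal_cos, ← ofReal_sin]
  push_cast
  ring

theorem one_sub_two_re_prod_eq_sum_sq_norm_iff (b0 s0 b1 b2 b3 x1 x2 x3 : ℝ) :
    1 - 2 * (((b0 : ℂ) - s0 * I) * ((b1 : ℂ) - x1 * I) * ((b2 : ℂ) - x2 * I)
        * ((b3 : ℂ) - x3 * I)).re
      = ‖(b1 : ℂ) - x1 * I‖ ^ 2 + ‖(b2 : ℂ) - x2 * I‖ ^ 2 + ‖(b3 : ℂ) - x3 * I‖ ^ 2 ↔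
    x1 ^ 2 + 2 * (s0 * x2 * x3 - b0 * b3 * x2 - b0 * b2 * x3 - s0 * b2 * b3) * x1
      + (x2 ^ 2 - 2 * b0 * b1 * x2 * x3 + x3 ^ 2 - 2 * s0 * b1 * b3 * x2
        - 2 * s0 * b1 * b2 * x3 + 2 * b0 * b1 * b2 * b3
        + b1 ^ 2 + b2 ^ 2 + b3 ^ 2 - 1) = 0 := by
  have expand :
      ‖(b1 : ℂ) - x1 * I‖ ^ 2 + ‖(b2 : ℂ) - x2 * I‖ ^ 2 + ‖(b3 : ℂ) - x3 * I‖ ^ 2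
        - (1 - 2 * (((b0 : ℂ) - s0 * I) * ((b1 : ℂ) - x1 * I) * ((b2 : ℂ) - x2 * I)
          * ((b3 : ℂ) - x3 * I)).re)
      = x1 ^ 2 + 2 * (s0 * x2 * x3 - b0 * b3 * x2 - b0 * b2 * x3 - s0 * b2 * b3) * x1
        + (x2 ^ 2 - 2 * b0 * b1 * x2 * x3 + x3 ^ 2 - 2 * s0 * b1 * b3 * x2
          - 2 * s0 * b1 * b2 * x3 + 2 * b0 * b1 * b2 * b3
          + b1 ^ 2 + b2 ^ 2 + b3 ^ 2 - 1) := by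
    simp only [Complex.sq_norm, normSq_apply, mul_re, mul_im, sub_re, sub_im, ofReal_re, ofReal_im,
      I_re, I_im]
    ring
  rw [← expand, sub_eq_zero, eq_comm]

theorem stmt4_general (a0 a1 a2 a3 : ℝ)
    (t1 t2 t3 : ℝ) :
    (let k0 : ℂ := Complex.exp (a0 * Complex.I)
     let k1 : ℂ := Complex.exp (a1 * Complex.I)
     let k2 : ℂ := Complex.exp (a2 * Complex.I)
     let k3 : ℂ := Complex.exp (a3 * Complex.I)
     let u1 : ℂ := (t1 : ℂ) * ((starRingEnd ℂ) k1 - k1) + k1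
     let u2 : ℂ := (t2 : ℂ) * ((starRingEnd ℂ) k2 - k2) + k2
     let u3 : ℂ := (t3 : ℂ) * ((starRingEnd ℂ) k3 - k3) + k3
     1 - 2 * ((starRingEnd ℂ) k0 * u1 * u2 * u3).re
       = ‖u1‖ ^ 2 + ‖u2‖ ^ 2 + ‖u3‖ ^ 2) ↔
    (let s0 := Real.sin a0
     let s1 := Real.sin a1
     let s2 := Real.sin a2
     let s3 := Real.sin a3
     let b0 := Real.cos a0
     let b1 := Real.cos a1
     let b2 := Real.cos a2
     let b3 := Real.cos a3
     let x1 := s1 * (2 * t1 - 1)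
     let x2 := s2 * (2 * t2 - 1)
     let x3 := s3 * (2 * t3 - 1)
     x1 ^ 2
       + 2 * (s0 * x2 * x3 - b0 * b3 * x2 - b0 * b2 * x3 - s0 * b2 * b3) * x1
       + (x2 ^ 2 - 2 * b0 * b1 * x2 * x3 + x3 ^ 2 - 2 * s0 * b1 * b3 * x2
          - 2 * s0 * b1 * b2 * x3 + 2 * b0 * b1 * b2 * b3
          + b1 ^ 2 + b2 ^ 2 + b3 ^ 2 - 1) = 0) := by
  dsimp only
  rw [conj_exp_ofReal_mul_I, ofReal_mul_conj_exp_sub_add_exp, ofReal_mul_conj_exp_sub_add_exp,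
    ofReal_mul_conj_exp_sub_add_exp]
  exact one_sub_two_re_prod_eq_sum_sq_norm_iff _ _ _ _ _ _ _ _

theorem stmt4 (a0 a1 a2 a3 : ℝ)
    (h0 : a0 ∈ Set.Ioo 0 π) (h1 : a1 ∈ Set.Ioo 0 π)
    (h2 : a2 ∈ Set.Ioo 0 π) (h3 : a3 ∈ Set.Ioo 0 π)
    (t1 t2 t3 : ℝ) (ht1 : 1 ≤ t1) (ht2 : 1 ≤ t2) (ht3 : 1 ≤ t3) :
    (let k0 : ℂ := Complex.exp (a0 * Complex.I)
     let k1 : ℂ := Complex.exp (a1 * Complex.I)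
     let k2 : ℂ := Complex.exp (a2 * Complex.I)
     let k3 : ℂ := Complex.exp (a3 * Complex.I)
     let u1 : ℂ := (t1 : ℂ) * ((starRingEnd ℂ) k1 - k1) + k1
     let u2 : ℂ := (t2 : ℂ) * ((starRingEnd ℂ) k2 - k2) + k2
     let u3 : ℂ := (t3 : ℂ) * ((starRingEnd ℂ) k3 - k3) + k3
     1 - 2 * ((starRingEnd ℂ) k0 * u1 * u2 * u3).re
       = ‖u1‖ ^ 2 + ‖u2‖ ^ 2 + ‖u3‖ ^ 2) ↔
    (let s0 := Real.sin a0
     let s1 := Real.sin a1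
     let s2 := Real.sin a2
     let s3 := Real.sin a3
     let b0 := Real.cos a0
     let b1 := Real.cos a1
     let b2 := Real.cos a2
     let b3 := Real.cos a3
     let x1 := s1 * (2 * t1 - 1)
     let x2 := s2 * (2 * t2 - 1)
     let x3 := s3 * (2 * t3 - 1)
     x1 ^ 2
       + 2 * (s0 * x2 * x3 - b0 * b3 * x2 - b0 * b2 * x3 - s0 * b2 * b3) * x1
       + (x2 ^ 2 - 2 * b0 * b1 * x2 * x3 + x3 ^ 2 - 2 * s0 * b1 * b3 * x2
          - 2 * s0 * b1 * b2 * x3 + 2 * b0 * b1 * b2 * b3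
          + b1 ^ 2 + b2 ^ 2 + b3 ^ 2 - 1) = 0) :=
  stmt4_general a0 a1 a2 a3 t1 t2 t3
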